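/- arXiv:2211.03092 — 3 statements merged into one kernel-verified Lean document; each statement's English description precedes it below -/
import Mathlib

section
/- Let δ : Ω → Ω be an additive map satisfying the Leibniz rule δ(x ∧ y) = δ(x) ∧ y + x ∧ δ(y) for all x, y ∈ Ω, with δ(Ω^0) ⊆ Ω^0 and δ(ϑ^α) ∈ Ω^1 for every α. Let p, q be fixed degrees and let ⋄ : Ω^p → Ω^q be an additive map satisfying ⋄(f · x) = f · ⋄(x) for all f ∈ Ω^0 = R and x ∈ Ω^p. Assume that for every increasing multi-index I of length p the variation of the mapped basis form satisfies δ(⋄ϑ^I) = Σ_{α} δ(ϑ^α) ∧ (e_α⌟(⋄ϑ^I)). Then for every A ∈ Ω^p the commutative variation identity holds: ⋄(δA) − δ(⋄A) = ⋄( Σ_{α} δ(ϑ^α) ∧ (e_α⌟A) ) − Σ_{α} δ(ϑ^α) ∧ (e_α⌟(⋄A)). -/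
open ExteriorAlgebra

/-- The interior product `e_α ⌟ ·` : contraction of the exterior algebra of `V*` by the
frame vector `e_α`, i.e. by the dual-basis coordinate functional `ϑ.coord α`.  It is the
unique antiderivation satisfying `e_α ⌟ ω = ω(e_α)` on 1-forms `ω`. -/
noncomputable def interiorProd {n : ℕ} {R W : Type*} [CommRing R] [AddCommGroup W]
    [Module R W] (ϑ : Module.Basis (Fin n) R W) (α : Fin n) (A : ExteriorAlgebra R W) :
    ExteriorAlgebra R W :=
  CliffordAlgebra.contractLeft (ϑ.coord α) A

/-- The basis `p`-form `ϑ^I = ϑ^{i₁} ∧ ⋯ ∧ ϑ^{i_p}` associated with an increasing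
multi-index `I = (i₁ < ⋯ < i_p)`, encoded as a finset `s = {i₁,…,i_p}`. -/
noncomputable def wedgeBasis {n : ℕ} {R W : Type*} [CommRing R] [AddCommGroup W]
    [Module R W] (ϑ : Module.Basis (Fin n) R W) (s : Finset (Fin n)) : ExteriorAlgebra R W :=
  ((s.sort (· ≤ ·)).map fun i => ExteriorAlgebra.ι R (ϑ i)).prod

section Helpers

variable {n : ℕ} {R W : Type*} [CommRing R] [AddCommGroup W] [Module R W]
  (ϑ : Module.Basis (Fin n) R W)

/-- Product of generators indexed by a list. -/
noncomputable def listWedge (l : List (Fin n)) : ExteriorAlgebra R W :=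
  (l.map fun i => ExteriorAlgebra.ι R (ϑ i)).prod

lemma listWedge_nil : listWedge ϑ ([] : List (Fin n)) = 1 := rfl

lemma listWedge_cons (i : Fin n) (l : List (Fin n)) :
    listWedge ϑ (i :: l) = ι R (ϑ i) * listWedge ϑ l := by
  simp [listWedge]

lemma wedgeBasis_eq (s : Finset (Fin n)) :
    wedgeBasis ϑ s = listWedge ϑ (s.sort (· ≤ ·)) := rfl

lemma swap3 (v w : W) (x : ExteriorAlgebra R W) :
    ι R v * (ι R w * x) = -(ι R w * (ι R v * x)) := by
  rw [← mul_assoc, ← mul_assoc, ← neg_mul]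
  congr 1
  exact eq_neg_of_add_eq_zero_left (ι_add_mul_swap v w)

lemma mul_listWedge_of_mem (i : Fin n) :
    ∀ l : List (Fin n), i ∈ l → ι R (ϑ i) * listWedge ϑ l = 0 := by
  intro l
  induction l with
  | nil => simp
  | cons j t ih =>
    intro hi
    rcases List.mem_cons.mp hi with h | h
    · subst h
      rw [listWedge_cons, ← mul_assoc, ι_sq_zero, zero_mul]
    · rw [listWedge_cons, swap3, ih h, mul_zero, neg_zero]

lemma mul_listWedge_orderedInsert :
    ∀ l : List (Fin n), l.Pairwise (· < ·) → ∀ i ∉ l,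
      listWedge ϑ (l.orderedInsert (· ≤ ·) i) = ι R (ϑ i) * listWedge ϑ l ∨
      listWedge ϑ (l.orderedInsert (· ≤ ·) i) = -(ι R (ϑ i) * listWedge ϑ l) := by
  intro l
  induction l with
  | nil =>
    intro _ i _
    left
    simp [List.orderedInsert, listWedge]
  | cons j t ih =>
    intro hs i hi
    have hij : i ≠ j := fun h => hi (h ▸ List.mem_cons_self)
    have hit : i ∉ t := fun h => hi (List.mem_cons_of_mem _ h)
    rw [List.orderedInsert_cons]
    by_cases h : i ≤ j
    · rw [if_pos h]
      left
      rw [listWedge_cons]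
    · rw [if_neg h]
      rcases ih hs.of_cons i hit with h1 | h1
      · right
        rw [listWedge_cons, h1, swap3, listWedge_cons]
      · left
        rw [listWedge_cons, h1, mul_neg, swap3, neg_neg, listWedge_cons]

lemma sort_insert_eq (i : Fin n) (s : Finset (Fin n)) (hi : i ∉ s) :
    (insert i s).sort (· ≤ ·) = (s.sort (· ≤ ·)).orderedInsert (· ≤ ·) i := by
  refine List.Perm.eq_of_pairwise' (Finset.pairwise_sort _ _)
    ((Finset.pairwise_sort s _).orderedInsert i _) ?_
  · exact ((Finset.sort_perm_toList _ _).trans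
      ((Finset.toList_insert hi).trans
        ((Finset.sort_perm_toList s _).symm.cons i))).trans
      (List.perm_orderedInsert _ _ _).symm

/-- The set of basis `k`-forms. -/
def wSet (k : ℕ) : Set (ExteriorAlgebra R W) := wedgeBasis ϑ '' {s | s.card = k}

lemma mul_wedge_mem (i : Fin n) (s : Finset (Fin n)) :
    ι R (ϑ i) * wedgeBasis ϑ s ∈ Submodule.span R (wSet ϑ (s.card + 1)) := by
  by_cases hi : i ∈ s
  · have h0 : ι R (ϑ i) * wedgeBasis ϑ s = 0 :=
      mul_listWedge_of_mem ϑ i _ ((Finset.mem_sort _).2 hi)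
    rw [h0]
    exact Submodule.zero_mem _
  · have hcard : (insert i s).card = s.card + 1 := Finset.card_insert_of_notMem hi
    have hmem : wedgeBasis ϑ (insert i s) ∈ wSet ϑ (s.card + 1) := ⟨insert i s, hcard, rfl⟩
    have hins := mul_listWedge_orderedInsert ϑ (s.sort (· ≤ ·)) (Finset.sortedLT_sort s).pairwise i
      (fun h => hi ((Finset.mem_sort _).1 h))
    have hwb : wedgeBasis ϑ (insert i s)
        = listWedge ϑ ((s.sort (· ≤ ·)).orderedInsert (· ≤ ·) i) := by
      rw [wedgeBasis_eq, sort_insert_eq i s hi]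
    rcases hins with h1 | h1
    · have : ι R (ϑ i) * wedgeBasis ϑ s = wedgeBasis ϑ (insert i s) := by
        rw [hwb, h1, wedgeBasis_eq]
      rw [this]
      exact Submodule.subset_span hmem
    · have : ι R (ϑ i) * wedgeBasis ϑ s = -wedgeBasis ϑ (insert i s) := by
        rw [hwb, h1, wedgeBasis_eq, neg_neg]
      rw [this]
      exact Submodule.neg_mem _ (Submodule.subset_span hmem)

lemma mul_span_mem (v : W) (k : ℕ) (x : ExteriorAlgebra R W)
    (hx : x ∈ Submodule.span R (wSet ϑ k)) :
    ι R v * x ∈ Submodule.span R (wSet ϑ (k + 1)) := by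
  induction hx using Submodule.span_induction with
  | mem x hx =>
    obtain ⟨s, hs, rfl⟩ := hx
    have hv : ι R v * wedgeBasis ϑ s
        = ∑ α : Fin n, ϑ.repr v α • (ι R (ϑ α) * wedgeBasis ϑ s) := by
      conv_lhs => rw [← ϑ.sum_repr v]
      rw [map_sum, Finset.sum_mul]
      simp [smul_mul_assoc]
    rw [hv]
    exact Submodule.sum_mem _ fun α _ =>
      Submodule.smul_mem _ _ (hs ▸ mul_wedge_mem ϑ α s)
  | zero => simp
  | add a b _ _ ha hb => rw [mul_add]; exact Submodule.add_mem _ ha hb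
  | smul r a _ ha => rw [mul_smul_comm]; exact Submodule.smul_mem _ _ ha

lemma wedgeBasis_empty : wedgeBasis ϑ (∅ : Finset (Fin n)) = 1 := by
  simp [wedgeBasis]

lemma mem_span_wSet {p : ℕ} (A : ExteriorAlgebra R W) (hA : A ∈ ⋀[R]^p W) :
    A ∈ Submodule.span R (wSet ϑ p) := by
  refine Submodule.pow_induction_on_left'
    (M := LinearMap.range (ι R : W →ₗ[R] ExteriorAlgebra R W))
    (C := fun k x _ => x ∈ Submodule.span R (wSet ϑ k)) ?_ ?_ ?_ hA
  · intro r
    have h1 : (wedgeBasis ϑ (∅ : Finset (Fin n))) ∈ wSet ϑ 0 := ⟨∅, Finset.card_empty, rfl⟩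
    rw [wedgeBasis_empty] at h1
    rw [Algebra.algebraMap_eq_smul_one]
    exact Submodule.smul_mem _ _ (Submodule.subset_span h1)
  · intro x y i _ _ hx hy
    exact Submodule.add_mem _ hx hy
  · intro m hm i x _ hx
    obtain ⟨v, rfl⟩ := hm
    exact mul_span_mem ϑ v i x hx

lemma delta_listWedge (δ : ExteriorAlgebra R W → ExteriorAlgebra R W)
    (hleibniz : ∀ x y, δ (x * y) = δ x * y + x * δ y)
    (hθ : ∀ α : Fin n, ∃ w : W, δ (ι R (ϑ α)) = ι R w) :
    ∀ l : List (Fin n),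
      δ (listWedge ϑ l) = ∑ α : Fin n, δ (ι R (ϑ α)) * interiorProd ϑ α (listWedge ϑ l) := by
  have h1 : δ 1 = 0 := by
    have h := hleibniz 1 1
    rw [mul_one, mul_one, one_mul] at h
    exact (left_eq_add.mp h)
  intro l
  induction l with
  | nil =>
    rw [listWedge_nil, h1]
    simp [interiorProd, CliffordAlgebra.contractLeft_one]
  | cons j t ih =>
    rw [listWedge_cons, hleibniz, ih]
    have hcoord : ∀ α : Fin n, ϑ.coord α (ϑ j) = if j = α then 1 else 0 := by
      intro α
      simp [Module.Basis.coord_apply, Finsupp.single_apply]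
    have key : ∀ α : Fin n,
        δ (ι R (ϑ α)) * interiorProd ϑ α (ι R (ϑ j) * listWedge ϑ t)
          = ϑ.coord α (ϑ j) • (δ (ι R (ϑ α)) * listWedge ϑ t)
            + ι R (ϑ j) * (δ (ι R (ϑ α)) * interiorProd ϑ α (listWedge ϑ t)) := by
      intro α
      obtain ⟨w, hw⟩ := hθ α
      have hcl : interiorProd ϑ α (ι R (ϑ j) * listWedge ϑ t)
          = ϑ.coord α (ϑ j) • listWedge ϑ t
            - ι R (ϑ j) * interiorProd ϑ α (listWedge ϑ t) :=
        CliffordAlgebra.contractLeft_ι_mul _ _ _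
      rw [hcl, mul_sub, mul_smul_comm, hw, swap3, sub_neg_eq_add]
    rw [Finset.sum_congr rfl fun α _ => key α, Finset.sum_add_distrib]
    congr 1
    · simp [hcoord, ite_smul]
    · rw [Finset.mul_sum]

end Helpers

/-- The commutative variation identity: if `δ` is an additive Leibniz variation operator
preserving degrees 0 and 1 on the generators, and `⋄` is an `R`-linear (constitutive) map
such that the variation of each mapped basis `p`-form `⋄ϑ^I` comes solely from the coframe
variation, i.e. `δ(⋄ϑ^I) = Σ_α δϑ^α ∧ (e_α ⌟ ⋄ϑ^I)`, then for every `p`-form `A`: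
`⋄(δA) − δ(⋄A) = ⋄(Σ_α δϑ^α ∧ (e_α ⌟ A)) − Σ_α δϑ^α ∧ (e_α ⌟ ⋄A)`. -/
theorem commutative_variation_identity {n p : ℕ} {R W : Type*} [CommRing R]
    [AddCommGroup W] [Module R W] (ϑ : Module.Basis (Fin n) R W)
    (δ : ExteriorAlgebra R W → ExteriorAlgebra R W)
    (hadd : ∀ x y, δ (x + y) = δ x + δ y)
    (hleibniz : ∀ x y, δ (x * y) = δ x * y + x * δ y)
    (hscal : ∀ r : R, δ (algebraMap R (ExteriorAlgebra R W) r) ∈ ⋀[R]^0 W)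
    (hϑ : ∀ α : Fin n, δ (ι R (ϑ α)) ∈ ⋀[R]^1 W)
    (dia : ExteriorAlgebra R W → ExteriorAlgebra R W)
    (hdadd : ∀ x y, dia (x + y) = dia x + dia y)
    (hdsmul : ∀ (r : R) x, dia (r • x) = r • dia x)
    (hdvar : ∀ s : Finset (Fin n), s.card = p →
      δ (dia (wedgeBasis ϑ s))
        = ∑ α : Fin n, δ (ι R (ϑ α)) * interiorProd ϑ α (dia (wedgeBasis ϑ s)))
    (A : ExteriorAlgebra R W) (hA : A ∈ ⋀[R]^p W) :
    dia (δ A) - δ (dia A)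
      = dia (∑ α : Fin n, δ (ι R (ϑ α)) * interiorProd ϑ α A)
        - ∑ α : Fin n, δ (ι R (ϑ α)) * interiorProd ϑ α (dia A) := by
  classical
  -- δ of generators lands in the image of ι
  have hθ : ∀ α : Fin n, ∃ w : W, δ (ι R (ϑ α)) = ι R w := by
    intro α
    have h : δ (ι R (ϑ α)) ∈ LinearMap.range (ι R : W →ₗ[R] ExteriorAlgebra R W) := by
      simpa using hϑ α
    obtain ⟨w, hw⟩ := h
    exact ⟨w, hw.symm⟩
  -- the coframe-variation operator L
  set L : ExteriorAlgebra R W → ExteriorAlgebra R W :=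
    fun x => ∑ α : Fin n, δ (ι R (ϑ α)) * interiorProd ϑ α x with hLdef
  have hLx : ∀ x, L x = ∑ α : Fin n, δ (ι R (ϑ α)) * interiorProd ϑ α x := fun _ => rfl
  rw [← hLx A, ← hLx (dia A)]
  have hLadd : ∀ x y, L (x + y) = L x + L y := by
    intro x y
    simp [hLx, interiorProd, map_add, mul_add, Finset.sum_add_distrib]
  have hLsmul : ∀ (r : R) x, L (r • x) = r • L x := by
    intro r x
    simp [hLx, interiorProd, map_smul, mul_smul_comm, Finset.smul_sum]
  -- δ on scalars
  choose g hg using fun r : R => Submodule.mem_one.mp (by simpa using hscal r)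
  have hδsmul : ∀ (r : R) x, δ (r • x) = g r • x + r • δ x := by
    intro r x
    rw [Algebra.smul_def, hleibniz, ← hg r, ← Algebra.smul_def, ← Algebra.smul_def]
  have hδ0 : δ 0 = 0 := by
    have h := hadd 0 0
    rw [add_zero] at h
    exact (left_eq_add.mp h)
  have hd0 : dia 0 = 0 := by
    have h := hdadd 0 0
    rw [add_zero] at h
    exact (left_eq_add.mp h)
  have hL0 : L 0 = 0 := by simp [hLx, interiorProd]
  -- the defect operator F
  set F : ExteriorAlgebra R W → ExteriorAlgebra R W :=
    fun x => dia (δ x) - δ (dia x) - dia (L x) + L (dia x) with hFdef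
  have hFx : ∀ x, F x = dia (δ x) - δ (dia x) - dia (L x) + L (dia x) := fun _ => rfl
  suffices hFA : F A = 0 by
    have h : dia (δ A) - δ (dia A) - (dia (L A) - L (dia A)) = F A := by
      rw [hFx]; abel
    rw [hFA] at h
    exact sub_eq_zero.mp h
  -- F vanishes on basis wedges
  have hFw : ∀ s : Finset (Fin n), s.card = p → F (wedgeBasis ϑ s) = 0 := by
    intro s hs
    have h1 : δ (wedgeBasis ϑ s) = L (wedgeBasis ϑ s) := by
      rw [hLx, wedgeBasis_eq]
      exact delta_listWedge ϑ δ hleibniz hθ _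
    have h2 : δ (dia (wedgeBasis ϑ s)) = L (dia (wedgeBasis ϑ s)) := by
      rw [hLx]; exact hdvar s hs
    rw [hFx, h1, h2]; abel
  have hF0 : F 0 = 0 := by
    simp [hFx, hδ0, hd0, hL0]
  have hFadd : ∀ x y, F x = 0 → F y = 0 → F (x + y) = 0 := by
    intro x y hx hy
    have h : F (x + y) = F x + F y := by
      simp only [hFx, hadd, hdadd, hLadd]; abel
    rw [h, hx, hy, add_zero]
  have hFsmul : ∀ (r : R) x, F x = 0 → F (r • x) = 0 := by
    intro r x hx
    have h : F (r • x) = r • F x := by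
      simp only [hFx, hδsmul, hdsmul, hdadd, hLsmul, smul_sub, smul_add]
      abel
    rw [h, hx, smul_zero]
  -- conclude by span induction
  have hAspan : A ∈ Submodule.span R (wSet ϑ p) := mem_span_wSet ϑ A hA
  clear hA
  induction hAspan using Submodule.span_induction with
  | mem x hx =>
    obtain ⟨s, hs, rfl⟩ := hx
    exact hFw s hs
  | zero => exact hF0
  | add a b _ _ ha hb => exact hFadd a b ha hb
  | smul r a _ ha => exact hFsmul r a ha
end

section
/- Let F be a p-form and G an (n−p)-form on an n-dimensional real vector space V with basis e_1,…,e_n and dual basis ϑ^1,…,ϑ^n. Define the Lagrangian L := −(1/2) F ∧ G and, for each α, the energy-momentum current Σ_α := (1/2) ( (−1)^p F ∧ (e_α⌟G) − (e_α⌟F) ∧ G ). Then the trace term satisfies Σ_{α=1}^{n} ϑ^α ∧ Σ_α = (2p − n) · L = (1/2)(n − 2p) F ∧ G. In particular, if n = 2p (F is a middle-degree form on an even-dimensional space), then Σ_{α} ϑ^α ∧ Σ_α = 0. -/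
open ExteriorAlgebra

lemma ema_comm {W : Type*} [AddCommGroup W] [Module ℝ W] {p : ℕ}
    {x : ExteriorAlgebra ℝ W} (hx : x ∈ ⋀[ℝ]^p W) (v : W) :
    ι ℝ v * x = ((-1 : ℝ) ^ p) • (x * ι ℝ v) := by
  refine Submodule.pow_induction_on_left' (M := LinearMap.range (ι ℝ (M := W)))
    (C := fun k y _ => ι ℝ v * y = ((-1 : ℝ) ^ k) • (y * ι ℝ v)) ?_ ?_ ?_ hx
  · intro r
    simp [Algebra.commutes]
  · intro a b i ha hb iha ihb
    simp [mul_add, add_mul, iha, ihb, smul_add]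
  · rintro m ⟨w, rfl⟩ i y hy ih
    have h1 : ι ℝ v * ι ℝ w = -(ι ℝ w * ι ℝ v) := by
      have := ExteriorAlgebra.ι_add_mul_swap (R := ℝ) v w
      exact eq_neg_of_add_eq_zero_left this
    calc ι ℝ v * (ι ℝ w * y) = (ι ℝ v * ι ℝ w) * y := by rw [mul_assoc]
      _ = -(ι ℝ w * (ι ℝ v * y)) := by rw [h1]; simp [mul_assoc]
      _ = -(ι ℝ w * (((-1:ℝ)^i) • (y * ι ℝ v))) := by rw [ih]
      _ = ((-1:ℝ)^(i+1)) • (ι ℝ w * y * ι ℝ v) := by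
          rw [mul_smul_comm, pow_succ]
          rw [← neg_smul]
          ring_nf
          rw [mul_assoc]

lemma ema_euler {n : ℕ} {W : Type*} [AddCommGroup W] [Module ℝ W]
    (ϑ : Module.Basis (Fin n) ℝ W) {k : ℕ} {A : ExteriorAlgebra ℝ W} (hA : A ∈ ⋀[ℝ]^k W) :
    ∑ α : Fin n, ι ℝ (ϑ α) * interiorProd ϑ α A = (k : ℝ) • A := by
  refine Submodule.pow_induction_on_left' (M := LinearMap.range (ι ℝ (M := W)))
    (C := fun k y _ => ∑ α : Fin n, ι ℝ (ϑ α) * interiorProd ϑ α y = (k : ℝ) • y) ?_ ?_ ?_ hA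
  · intro r
    simp [interiorProd, CliffordAlgebra.contractLeft_algebraMap]
  · intro a b i ha hb iha ihb
    simp only [interiorProd, map_add, mul_add, Finset.sum_add_distrib, smul_add] at *
    rw [iha, ihb]
  · rintro m ⟨v, rfl⟩ i y hy ih
    have hD : ∀ α, interiorProd ϑ α (ι ℝ v * y)
        = ϑ.coord α v • y - ι ℝ v * interiorProd ϑ α y := by
      intro α
      exact CliffordAlgebra.contractLeft_ι_mul (ϑ.coord α) v y
    simp only [hD, mul_sub]
    rw [Finset.sum_sub_distrib]
    have h1 : ∑ α : Fin n, ι ℝ (ϑ α) * (ϑ.coord α v • y) = ι ℝ v * y := by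
      have : ∑ α : Fin n, ι ℝ (ϑ α) * (ϑ.coord α v • y)
          = (∑ α : Fin n, ϑ.coord α v • ι ℝ (ϑ α)) * y := by
        rw [Finset.sum_mul]
        congr 1; ext α; rw [smul_mul_assoc, mul_smul_comm]
      rw [this]
      have hv : (∑ α : Fin n, ϑ.coord α v • ϑ α) = v := by
        simpa [Module.Basis.coord] using ϑ.sum_repr v
      rw [show (∑ α : Fin n, ϑ.coord α v • ι ℝ (ϑ α)) = ι ℝ (∑ α : Fin n, ϑ.coord α v • ϑ α) by
        rw [map_sum]; simp only [map_smul]]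
      rw [hv]
    have h2 : ∑ α : Fin n, ι ℝ (ϑ α) * (ι ℝ v * interiorProd ϑ α y)
        = -(ι ℝ v * ((i : ℝ) • y)) := by
      rw [← ih, Finset.mul_sum, ← Finset.sum_neg_distrib]
      congr 1; ext α
      have h1 : ι ℝ (ϑ α) * ι ℝ v = -(ι ℝ v * ι ℝ (ϑ α)) := by
        have := ExteriorAlgebra.ι_add_mul_swap (R := ℝ) (ϑ α) v
        exact eq_neg_of_add_eq_zero_left this
      rw [← mul_assoc, h1, neg_mul, mul_assoc]
    rw [h1, h2, sub_neg_eq_add, mul_smul_comm, Nat.cast_succ, add_smul, one_smul]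
    abel

lemma ema_neg_one_sq (p : ℕ) : ((-1 : ℝ) ^ p) * ((-1 : ℝ) ^ p) = 1 := by
  rw [← pow_add]
  exact Even.neg_one_pow ⟨p, rfl⟩

/-- Trace of the energy-momentum current of a Maxwell-type Lagrangian: for a `p`-form `F`
and an `(n−p)`-form `G`, with `L = −(1/2) F ∧ G` and
`Σ_α = (1/2)((−1)^p F ∧ (e_α⌟G) − (e_α⌟F) ∧ G)`, the trace term satisfies
`Σ_α ϑ^α ∧ Σ_α = (2p − n) • L = (1/2)(n − 2p) • (F ∧ G)`; in particular it vanishes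
when `n = 2p`. -/
theorem energy_momentum_trace {n p : ℕ} {W : Type*} [AddCommGroup W] [Module ℝ W]
    (hp : p ≤ n) (ϑ : Module.Basis (Fin n) ℝ W) (F G : ExteriorAlgebra ℝ W)
    (hF : F ∈ ⋀[ℝ]^p W) (hG : G ∈ ⋀[ℝ]^(n - p) W)
    (L : ExteriorAlgebra ℝ W) (hL : L = -((1 : ℝ) / 2) • (F * G))
    (Sig : Fin n → ExteriorAlgebra ℝ W)
    (hSig : ∀ α, Sig α = ((1 : ℝ) / 2) •
      ((-1 : ℝ) ^ p • (F * interiorProd ϑ α G) - interiorProd ϑ α F * G)) :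
    (∑ α : Fin n, ι ℝ (ϑ α) * Sig α = (2 * (p : ℝ) - (n : ℝ)) • L) ∧
    (∑ α : Fin n, ι ℝ (ϑ α) * Sig α = (((1 : ℝ) / 2) * ((n : ℝ) - 2 * (p : ℝ))) • (F * G)) ∧
    (n = 2 * p → ∑ α : Fin n, ι ℝ (ϑ α) * Sig α = 0) := by
  have key : ∑ α : Fin n, ι ℝ (ϑ α) * Sig α
      = (((1 : ℝ) / 2) * ((n : ℝ) - 2 * (p : ℝ))) • (F * G) := by
    have hterm : ∀ α : Fin n, ι ℝ (ϑ α) * Sig α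
        = ((1 : ℝ) / 2) • (F * (ι ℝ (ϑ α) * interiorProd ϑ α G)
            - (ι ℝ (ϑ α) * interiorProd ϑ α F) * G) := by
      intro α
      rw [hSig α, mul_smul_comm, mul_sub, mul_smul_comm]
      congr 2
      · -- (-1)^p • (ι(ϑα) * (F * X)) = F * (ι(ϑα) * X)
        rw [← mul_assoc, ema_comm hF (ϑ α), smul_mul_assoc, mul_assoc, smul_smul,
          ema_neg_one_sq, one_smul]
      · rw [mul_assoc]
    simp only [hterm]
    rw [← Finset.smul_sum, Finset.sum_sub_distrib, ← Finset.mul_sum, ← Finset.sum_mul,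
      ema_euler ϑ hG, ema_euler ϑ hF]
    have hc : ((n - p : ℕ) : ℝ) = (n : ℝ) - (p : ℝ) := by
      exact Nat.cast_sub hp
    rw [hc, mul_smul_comm, smul_mul_assoc, ← sub_smul, smul_smul]
    ring_nf
  refine ⟨?_, key, ?_⟩
  · rw [key, hL, smul_smul]
    congr 1
    ring
  · intro hn
    rw [key, hn]
    push_cast
    ring_nf
    simp
end

section
/- Let F be a p-form and G a q-form on an n-dimensional real vector space V with basis e_1,…,e_n and dual basis ϑ^1,…,ϑ^n, let (η^{αβ}) be a symmetric real n×n matrix, and define Σ_β := (1/2) ( (−1)^p F ∧ (e_β⌟G) − (e_β⌟F) ∧ G ). Then the contracted interior product satisfies Σ_{α,β} η^{αβ} e_α⌟Σ_β = (−1)^p Σ_{α,β} η^{αβ} (e_α⌟F) ∧ (e_β⌟G). -/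
open ExteriorAlgebra

section Aux
variable {W : Type*} [AddCommGroup W] [Module ℝ W]

/-- Contraction vanishes on 0-forms. -/
lemma contractLeft_of_mem_zero (d : Module.Dual ℝ W) {x : ExteriorAlgebra ℝ W}
    (hx : x ∈ ⋀[ℝ]^0 W) : CliffordAlgebra.contractLeft d x = 0 := by
  rw [exteriorPower, pow_zero] at hx
  obtain ⟨r, rfl⟩ := Submodule.mem_one.mp hx
  exact CliffordAlgebra.contractLeft_algebraMap _ _ _

/-- Contraction lowers the degree by one. -/
lemma contractLeft_mem_of_mem (d : Module.Dual ℝ W) {p : ℕ} {x : ExteriorAlgebra ℝ W}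
    (hx : x ∈ ⋀[ℝ]^p W) : CliffordAlgebra.contractLeft d x ∈ ⋀[ℝ]^(p - 1) W := by
  induction hx using Submodule.pow_induction_on_left' with
  | algebraMap r => rw [CliffordAlgebra.contractLeft_algebraMap]; exact Submodule.zero_mem _
  | add x y i hx hy ihx ihy => rw [map_add]; exact Submodule.add_mem _ ihx ihy
  | mem_mul m hm i x hx ih =>
    obtain ⟨v, rfl⟩ := hm
    rw [CliffordAlgebra.contractLeft_ι_mul]
    refine Submodule.sub_mem _ (Submodule.smul_mem _ _ (by simpa using hx)) ?_
    rcases i with _ | i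
    · rw [contractLeft_of_mem_zero d hx, mul_zero]; exact Submodule.zero_mem _
    · have : ExteriorAlgebra.ι ℝ v * CliffordAlgebra.contractLeft d x
          ∈ (LinearMap.range (ExteriorAlgebra.ι ℝ (M := W))) * ⋀[ℝ]^(i + 1 - 1) W :=
        Submodule.mul_mem_mul (LinearMap.mem_range_self _ _) ih
      simpa [exteriorPower, pow_succ', Nat.succ_sub_one] using this

/-- The interior product is an antiderivation. -/
lemma contractLeft_mul_of_mem (d : Module.Dual ℝ W) {p : ℕ} {x : ExteriorAlgebra ℝ W}
    (hx : x ∈ ⋀[ℝ]^p W) (y : ExteriorAlgebra ℝ W) :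
    CliffordAlgebra.contractLeft d (x * y)
      = CliffordAlgebra.contractLeft d x * y
        + (-1 : ℝ) ^ p • (x * CliffordAlgebra.contractLeft d y) := by
  induction hx using Submodule.pow_induction_on_left' with
  | algebraMap r =>
    rw [CliffordAlgebra.contractLeft_algebraMap_mul, CliffordAlgebra.contractLeft_algebraMap,
      zero_mul, zero_add, pow_zero, one_smul]
  | add a b i ha hb iha ihb =>
    simp only [add_mul, map_add, iha, ihb, smul_add]
    abel
  | mem_mul m hm i x hx ih =>
    obtain ⟨v, rfl⟩ := hm
    rw [mul_assoc, CliffordAlgebra.contractLeft_ι_mul, ih, CliffordAlgebra.contractLeft_ι_mul,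
      sub_mul, smul_mul_assoc, mul_add, mul_smul_comm, pow_succ, mul_smul, neg_one_smul,
      mul_assoc, mul_assoc]
    module
lemma sym_antisym_sum_zero {n : ℕ} (η : Matrix (Fin n) (Fin n) ℝ) (hη : η.IsSymm)
    (f : Fin n → Fin n → ExteriorAlgebra ℝ W) (hf : ∀ α β, f α β = - f β α) :
    ∑ α : Fin n, ∑ β : Fin n, η α β • f α β = 0 := by
  set S := ∑ α : Fin n, ∑ β : Fin n, η α β • f α β with hS
  have h : S = -S := by
    calc S = ∑ β : Fin n, ∑ α : Fin n, η α β • f α β := Finset.sum_comm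
    _ = ∑ β : Fin n, ∑ α : Fin n, -(η β α • f β α) := by
        refine Finset.sum_congr rfl fun β _ => Finset.sum_congr rfl fun α _ => ?_
        rw [hf α β, hη.apply, smul_neg]
    _ = -S := by simp [hS]
  have h2 : (2 : ℝ) • S = 0 := by rw [two_smul]; nth_rewrite 1 [h]; abel
  rcases smul_eq_zero.mp h2 with h | h
  · norm_num at h
  · exact h

end Aux

/-- Contracted interior product of the Hilbert energy-momentum current: for a `p`-form `F`,
a `q`-form `G`, a symmetric matrix `η`, and
`Σ_β = (1/2)((−1)^p F ∧ (e_β⌟G) − (e_β⌟F) ∧ G)`, one has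
`Σ_{α,β} η^{αβ} e_α ⌟ Σ_β = (−1)^p Σ_{α,β} η^{αβ} (e_α⌟F) ∧ (e_β⌟G)`. -/
theorem contracted_interior_of_current {n p q : ℕ} {W : Type*} [AddCommGroup W] [Module ℝ W]
    (ϑ : Module.Basis (Fin n) ℝ W) (η : Matrix (Fin n) (Fin n) ℝ) (hη : η.IsSymm)
    (F G : ExteriorAlgebra ℝ W) (hF : F ∈ ⋀[ℝ]^p W) (hG : G ∈ ⋀[ℝ]^q W)
    (Sig : Fin n → ExteriorAlgebra ℝ W)
    (hSig : ∀ β, Sig β = ((1 : ℝ) / 2) •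
      ((-1 : ℝ) ^ p • (F * interiorProd ϑ β G) - interiorProd ϑ β F * G)) :
    ∑ α : Fin n, ∑ β : Fin n, η α β • interiorProd ϑ α (Sig β)
      = (-1 : ℝ) ^ p •
        ∑ α : Fin n, ∑ β : Fin n, η α β • (interiorProd ϑ α F * interiorProd ϑ β G) := by
  simp only [interiorProd] at hSig ⊢
  have key : ∀ α β : Fin n, CliffordAlgebra.contractLeft (ϑ.coord α) (Sig β)
      = ((1 : ℝ) / 2 * (-1 : ℝ) ^ p) •
          (CliffordAlgebra.contractLeft (ϑ.coord α) F * CliffordAlgebra.contractLeft (ϑ.coord β) G)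
        + ((1 : ℝ) / 2 * (-1 : ℝ) ^ p) •
          (CliffordAlgebra.contractLeft (ϑ.coord β) F * CliffordAlgebra.contractLeft (ϑ.coord α) G)
        + ((1 : ℝ) / 2) • (F * CliffordAlgebra.contractLeft (ϑ.coord α)
            (CliffordAlgebra.contractLeft (ϑ.coord β) G))
        - ((1 : ℝ) / 2) • (CliffordAlgebra.contractLeft (ϑ.coord α)
            (CliffordAlgebra.contractLeft (ϑ.coord β) F) * G) := by
    intro α β
    rw [hSig β, map_smul, map_sub, map_smul,
      contractLeft_mul_of_mem _ hF,
      contractLeft_mul_of_mem _ (contractLeft_mem_of_mem (ϑ.coord β) hF) G]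
    rcases p with _ | p
    · rw [contractLeft_of_mem_zero (ϑ.coord β) hF]
      simp only [pow_zero, Nat.zero_sub, zero_mul, mul_zero, smul_zero, zero_smul]
      module
    · simp only [Nat.succ_sub_one]
      have hsq : ((-1 : ℝ) ^ (p + 1)) * ((-1 : ℝ) ^ (p + 1)) = 1 := by
        rw [← pow_add]
        exact Even.neg_one_pow ⟨p + 1, by ring⟩
      rw [smul_add ((-1 : ℝ) ^ (p + 1)), smul_smul ((-1 : ℝ) ^ (p + 1)), hsq, one_smul]
      module
  have expand : ∀ (c : ℝ) (g : Fin n → Fin n → ExteriorAlgebra ℝ W),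
      ∑ α : Fin n, ∑ β : Fin n, η α β • (c • g α β)
        = c • ∑ α : Fin n, ∑ β : Fin n, η α β • g α β := by
    intro c g
    rw [Finset.smul_sum]
    refine Finset.sum_congr rfl fun α _ => ?_
    rw [Finset.smul_sum]
    exact Finset.sum_congr rfl fun β _ => smul_comm _ _ _
  have hzero1 : ∑ α : Fin n, ∑ β : Fin n, η α β •
      (F * CliffordAlgebra.contractLeft (ϑ.coord α)
        (CliffordAlgebra.contractLeft (ϑ.coord β) G)) = 0 := by
    refine sym_antisym_sum_zero η hη _ fun α β => ?_
    rw [CliffordAlgebra.contractLeft_comm, mul_neg]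
  have hzero2 : ∑ α : Fin n, ∑ β : Fin n, η α β •
      (CliffordAlgebra.contractLeft (ϑ.coord α)
        (CliffordAlgebra.contractLeft (ϑ.coord β) F) * G) = 0 := by
    refine sym_antisym_sum_zero η hη _ fun α β => ?_
    rw [CliffordAlgebra.contractLeft_comm, neg_mul]
  have hswap : ∑ α : Fin n, ∑ β : Fin n, η α β •
        (CliffordAlgebra.contractLeft (ϑ.coord β) F * CliffordAlgebra.contractLeft (ϑ.coord α) G)
      = ∑ α : Fin n, ∑ β : Fin n, η α β •
        (CliffordAlgebra.contractLeft (ϑ.coord α) F *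
          CliffordAlgebra.contractLeft (ϑ.coord β) G) := by
    rw [Finset.sum_comm]
    exact Finset.sum_congr rfl fun α _ => Finset.sum_congr rfl fun β _ => by rw [hη.apply]
  calc ∑ α : Fin n, ∑ β : Fin n, η α β • CliffordAlgebra.contractLeft (ϑ.coord α) (Sig β)
      = ∑ α : Fin n, ∑ β : Fin n,
          (η α β • (((1 : ℝ) / 2 * (-1 : ℝ) ^ p) • (CliffordAlgebra.contractLeft (ϑ.coord α) F *
              CliffordAlgebra.contractLeft (ϑ.coord β) G))
            + η α β • (((1 : ℝ) / 2 * (-1 : ℝ) ^ p) •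
              (CliffordAlgebra.contractLeft (ϑ.coord β) F *
                CliffordAlgebra.contractLeft (ϑ.coord α) G))
            + η α β • (((1 : ℝ) / 2) • (F * CliffordAlgebra.contractLeft (ϑ.coord α)
                (CliffordAlgebra.contractLeft (ϑ.coord β) G)))
            - η α β • (((1 : ℝ) / 2) • (CliffordAlgebra.contractLeft (ϑ.coord α)
                (CliffordAlgebra.contractLeft (ϑ.coord β) F) * G))) := by
        simp only [key, smul_add, smul_sub]
    _ = ((1 : ℝ) / 2 * (-1 : ℝ) ^ p) • (∑ α : Fin n, ∑ β : Fin n, η α β •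
          (CliffordAlgebra.contractLeft (ϑ.coord α) F *
            CliffordAlgebra.contractLeft (ϑ.coord β) G))
        + ((1 : ℝ) / 2 * (-1 : ℝ) ^ p) • (∑ α : Fin n, ∑ β : Fin n, η α β •
          (CliffordAlgebra.contractLeft (ϑ.coord β) F *
            CliffordAlgebra.contractLeft (ϑ.coord α) G))
        + ((1 : ℝ) / 2) • (∑ α : Fin n, ∑ β : Fin n, η α β •
          (F * CliffordAlgebra.contractLeft (ϑ.coord α)
            (CliffordAlgebra.contractLeft (ϑ.coord β) G)))
        - ((1 : ℝ) / 2) • (∑ α : Fin n, ∑ β : Fin n, η α β •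
          (CliffordAlgebra.contractLeft (ϑ.coord α)
            (CliffordAlgebra.contractLeft (ϑ.coord β) F) * G)) := by
        simp only [Finset.sum_add_distrib, Finset.sum_sub_distrib]
        rw [expand, expand, expand, expand]
    _ = (-1 : ℝ) ^ p • ∑ α : Fin n, ∑ β : Fin n, η α β •
          (CliffordAlgebra.contractLeft (ϑ.coord α) F *
            CliffordAlgebra.contractLeft (ϑ.coord β) G) := by
        rw [hzero1, hzero2, hswap]
        module
end
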